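/- In a vector Frölicher space: if φ₁, φ₂ : X → Y are morphisms of vector Frölicher spaces and α : X → ℝ is a morphism, then the pointwise combination α·φ₁ + φ₂ : X → Y is also a morphism. -/
import Mathlib


/-- An ℝ-vector Frölicher space structure on a real vector space `X`. -/
structure VFrolicher (X : Type*) [AddCommGroup X] [Module ℝ X] where
  curves : Set (ℝ → X)
  functionals : Set (X → ℝ)
  comp_smooth : ∀ c ∈ curves, ∀ f ∈ functionals, ContDiff ℝ (⊤ : ℕ∞) (f ∘ c)
  curve_sat : ∀ c : ℝ → X, (∀ f ∈ functionals, ContDiff ℝ (⊤ : ℕ∞) (f ∘ c)) → c ∈ curves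
  func_sat : ∀ f : X → ℝ, (∀ c ∈ curves, ContDiff ℝ (⊤ : ℕ∞) (f ∘ c)) → f ∈ functionals
  vector_curves : ∀ c ∈ curves, ∀ c' ∈ curves, ∀ α : ℝ → ℝ, ContDiff ℝ (⊤ : ℕ∞) α →
    (fun t => α t • c t + c' t) ∈ curves

/-- A morphism of vector Frölicher spaces. -/
def VFrolicher.IsMorphism {X Y : Type*} [AddCommGroup X] [Module ℝ X]
    [AddCommGroup Y] [Module ℝ Y] (SX : VFrolicher X) (SY : VFrolicher Y)
    (φ : X → Y) : Prop :=
  ∀ c ∈ SX.curves, ∀ f ∈ SY.functionals, ContDiff ℝ (⊤ : ℕ∞) (f ∘ φ ∘ c)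

/-- A real-valued morphism on a vector Frölicher space. -/
def VFrolicher.IsRealMorphism {X : Type*} [AddCommGroup X] [Module ℝ X]
    (SX : VFrolicher X) (α : X → ℝ) : Prop :=
  ∀ c ∈ SX.curves, ContDiff ℝ (⊤ : ℕ∞) (α ∘ c)

theorem stmt_14 {X Y : Type*} [AddCommGroup X] [Module ℝ X]
    [AddCommGroup Y] [Module ℝ Y] (SX : VFrolicher X) (SY : VFrolicher Y)
    (φ₁ φ₂ : X → Y) (α : X → ℝ)
    (h₁ : SX.IsMorphism SY φ₁) (h₂ : SX.IsMorphism SY φ₂)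
    (hα : SX.IsRealMorphism α) :
    SX.IsMorphism SY (fun x => α x • φ₁ x + φ₂ x) := by
  intro c hc f hf
  have hc1 : (φ₁ ∘ c) ∈ SY.curves := SY.curve_sat _ (fun g hg => h₁ c hc g hg)
  have hc2 : (φ₂ ∘ c) ∈ SY.curves := SY.curve_sat _ (fun g hg => h₂ c hc g hg)
  have hcomb := SY.vector_curves _ hc1 _ hc2 (α ∘ c) (hα c hc)
  exact SY.comp_smooth _ hcomb f hf
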